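/- For c ∈ ℝ define R_c : ℂ² × ℂ² → ℂ by R_c(z,w) = z₁²·conj(w₁)² + (c−2)·z₁·z₂·conj(w₁)·conj(w₂) + z₂²·conj(w₂)². Then R_c ∈ 𝒫_1(ℂ²) if and only if c ≥ 0, and for every integer k ≥ 2, R_c ∈ 𝒫_k(ℂ²) if and only if c ≥ 2. Consequently the family S = {R_c : c ≥ 0} has stability index I(S) = 2. -/
import Mathlib


open scoped ComplexOrder

/-- `R ∈ 𝒫_N(ℂ²)`: for all points `z_1, …, z_N ∈ ℂ²` and scalars `a_1, …, a_N ∈ ℂ`,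
the sum `Σ_{i,j} R(z_i, z_j) a_i conj(a_j)` is a nonnegative real number. -/
def InP {M : Type*} (N : ℕ) (R : M × M → ℂ) : Prop :=
  ∀ (z : Fin N → M) (a : Fin N → ℂ),
    0 ≤ ∑ i, ∑ j, R (z i, z j) * a i * (starRingEnd ℂ) (a j)

/-- Example 1: `R_c(z,w) = z₁² conj(w₁)² + (c−2) z₁ z₂ conj(w₁) conj(w₂) + z₂² conj(w₂)²`. -/
noncomputable def Rc (c : ℝ) : (ℂ × ℂ) × (ℂ × ℂ) → ℂ :=
  fun p =>
    p.1.1 ^ 2 * ((starRingEnd ℂ) p.2.1) ^ 2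
      + ((c : ℂ) - 2) * p.1.1 * p.1.2 * (starRingEnd ℂ) p.2.1 * (starRingEnd ℂ) p.2.2
      + p.1.2 ^ 2 * ((starRingEnd ℂ) p.2.2) ^ 2

lemma rc_expand (c : ℝ) {N : ℕ} (z : Fin N → ℂ × ℂ) (a : Fin N → ℂ) :
    ∑ i, ∑ j, Rc c (z i, z j) * a i * (starRingEnd ℂ) (a j)
      = ((Complex.normSq (∑ i, (z i).1 ^ 2 * a i)
          + (c - 2) * Complex.normSq (∑ i, (z i).1 * (z i).2 * a i)
          + Complex.normSq (∑ i, (z i).2 ^ 2 * a i) : ℝ) : ℂ) := by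
  have h : ∀ i j : Fin N, Rc c (z i, z j) * a i * (starRingEnd ℂ) (a j)
      = ((z i).1 ^ 2 * a i) * (starRingEnd ℂ) ((z j).1 ^ 2 * a j)
        + ((c : ℂ) - 2) * (((z i).1 * (z i).2 * a i) *
            (starRingEnd ℂ) ((z j).1 * (z j).2 * a j))
        + ((z i).2 ^ 2 * a i) * (starRingEnd ℂ) ((z j).2 ^ 2 * a j) := by
    intro i j
    simp only [Rc, map_mul, map_pow]
    ring
  have e1 : (∑ i, (z i).1 ^ 2 * a i) * (starRingEnd ℂ) (∑ j, (z j).1 ^ 2 * a j)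
      = ∑ i, ∑ j, ((z i).1 ^ 2 * a i) * (starRingEnd ℂ) ((z j).1 ^ 2 * a j) := by
    rw [map_sum, Finset.sum_mul_sum]
  have e2 : ((c : ℂ) - 2) * ((∑ i, (z i).1 * (z i).2 * a i) *
        (starRingEnd ℂ) (∑ j, (z j).1 * (z j).2 * a j))
      = ∑ i, ∑ j, ((c : ℂ) - 2) * (((z i).1 * (z i).2 * a i) *
          (starRingEnd ℂ) ((z j).1 * (z j).2 * a j)) := by
    rw [map_sum, Finset.sum_mul_sum, Finset.mul_sum]
    simp_rw [Finset.mul_sum]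
  have e3 : (∑ i, (z i).2 ^ 2 * a i) * (starRingEnd ℂ) (∑ j, (z j).2 ^ 2 * a j)
      = ∑ i, ∑ j, ((z i).2 ^ 2 * a i) * (starRingEnd ℂ) ((z j).2 ^ 2 * a j) := by
    rw [map_sum, Finset.sum_mul_sum]
  calc ∑ i, ∑ j, Rc c (z i, z j) * a i * (starRingEnd ℂ) (a j)
      = ∑ i, ∑ j, (((z i).1 ^ 2 * a i) * (starRingEnd ℂ) ((z j).1 ^ 2 * a j)
        + ((c : ℂ) - 2) * (((z i).1 * (z i).2 * a i) *
            (starRingEnd ℂ) ((z j).1 * (z j).2 * a j))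
        + ((z i).2 ^ 2 * a i) * (starRingEnd ℂ) ((z j).2 ^ 2 * a j)) := by
        exact Finset.sum_congr rfl fun i _ => Finset.sum_congr rfl fun j _ => h i j
    _ = (∑ i, ∑ j, ((z i).1 ^ 2 * a i) * (starRingEnd ℂ) ((z j).1 ^ 2 * a j))
        + (∑ i, ∑ j, ((c : ℂ) - 2) * (((z i).1 * (z i).2 * a i) *
            (starRingEnd ℂ) ((z j).1 * (z j).2 * a j)))
        + (∑ i, ∑ j, ((z i).2 ^ 2 * a i) * (starRingEnd ℂ) ((z j).2 ^ 2 * a j)) := by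
        simp [Finset.sum_add_distrib]
    _ = (∑ i, (z i).1 ^ 2 * a i) * (starRingEnd ℂ) (∑ j, (z j).1 ^ 2 * a j)
        + ((c : ℂ) - 2) * ((∑ i, (z i).1 * (z i).2 * a i) *
            (starRingEnd ℂ) (∑ j, (z j).1 * (z j).2 * a j))
        + (∑ i, (z i).2 ^ 2 * a i) * (starRingEnd ℂ) (∑ j, (z j).2 ^ 2 * a j) := by
        rw [e1, e2, e3]
    _ = _ := by
        rw [Complex.mul_conj, Complex.mul_conj, Complex.mul_conj]
        push_cast
        ring

lemma suff (c : ℝ) (hc : 2 ≤ c) (N : ℕ) : InP N (Rc c) := by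
  intro z a
  rw [rc_expand]
  rw [Complex.zero_le_real]
  have h1 := Complex.normSq_nonneg (∑ i, (z i).1 ^ 2 * a i)
  have h2 := Complex.normSq_nonneg (∑ i, (z i).1 * (z i).2 * a i)
  have h3 := Complex.normSq_nonneg (∑ i, (z i).2 ^ 2 * a i)
  nlinarith

lemma inp1_iff (c : ℝ) : InP 1 (Rc c) ↔ 0 ≤ c := by
  constructor
  · intro h
    have := h ![((1 : ℂ), (1 : ℂ))] ![1]
    rw [rc_expand, Complex.zero_le_real] at this
    simp at this
    linarith
  · intro hc z a
    rw [rc_expand, Complex.zero_le_real]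
    simp only [Fin.sum_univ_one]
    have hx := Complex.normSq_nonneg (z 0).1
    have hy := Complex.normSq_nonneg (z 0).2
    have hu := Complex.normSq_nonneg (a 0)
    have hp : ∀ w : ℂ, Complex.normSq (w ^ 2) = Complex.normSq w ^ 2 :=
      fun w => map_pow Complex.normSq w 2
    simp only [Complex.normSq_mul, hp]
    nlinarith [mul_nonneg (sq_nonneg (Complex.normSq (z 0).1 - Complex.normSq (z 0).2)) hu,
      mul_nonneg (mul_nonneg (mul_nonneg hx hy) hu) hc]

lemma nec2 (c : ℝ) (k : ℕ) (hk : 2 ≤ k) (h : InP k (Rc c)) : 2 ≤ c := by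
  obtain ⟨n, rfl⟩ := Nat.exists_eq_add_of_le' hk
  have h01 : (0 : Fin (n + 2)) ≠ 1 := by simp [Fin.ext_iff]
  set z : Fin (n + 2) → ℂ × ℂ := fun i => (1, if i = 0 then 1 else -1) with hz
  set a : Fin (n + 2) → ℂ := fun i =>
    (if i = 0 then 1 else 0) + (if i = 1 then -1 else 0) with ha
  have := h z a
  rw [rc_expand] at this
  have hA : (∑ i, (z i).1 ^ 2 * a i) = 0 := by
    simp [hz, ha, Finset.sum_add_distrib, h01]
  have hB : (∑ i, (z i).1 * (z i).2 * a i) = 2 := by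
    simp [hz, ha, Finset.sum_add_distrib, mul_add, h01, Ne.symm h01]
    ring
  have hC : (∑ i, (z i).2 ^ 2 * a i) = 0 := by
    have : ∀ i : Fin (n + 2), (z i).2 ^ 2 * a i = a i := by
      intro i
      by_cases hi : i = 0 <;> simp [hz, hi]
    rw [Finset.sum_congr rfl fun i _ => this i]
    simp [ha, Finset.sum_add_distrib, h01]
  rw [hA, hB, hC] at this
  rw [Complex.zero_le_real] at this
  simp [Complex.normSq] at this
  nlinarith


/-- Example 1: `R_c ∈ 𝒫_1(ℂ²)` iff `c ≥ 0`; for every `k ≥ 2`, `R_c ∈ 𝒫_k(ℂ²)` iff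
`c ≥ 2`; consequently the family `S = {R_c : c ≥ 0}` has stability index `2`, i.e. `2`
is the least `k` with `S ∩ 𝒫_k = S ∩ 𝒫_∞`. -/
theorem stmt19 :
    (∀ c : ℝ, InP 1 (Rc c) ↔ 0 ≤ c) ∧
      (∀ c : ℝ, ∀ k : ℕ, 2 ≤ k → (InP k (Rc c) ↔ 2 ≤ c)) ∧
      IsLeast {k : ℕ | ∀ c : ℝ, 0 ≤ c →
        (InP k (Rc c) ↔ ∀ N : ℕ, 0 < N → InP N (Rc c))} 2 := by
  refine ⟨inp1_iff, fun c k hk => ⟨nec2 c k hk, fun hc => suff c hc k⟩, ?_, ?_⟩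
  · intro c hc
    constructor
    · intro h N _
      exact suff c (nec2 c 2 le_rfl h) N
    · intro h
      exact h 2 (by norm_num)
  · intro k hk
    by_contra hlt
    push_neg at hlt
    interval_cases k
    · have h0 : InP 0 (Rc 1) := by
        intro z a
        simp
      have := (hk 1 (by norm_num)).mp h0 2 (by norm_num)
      have := nec2 1 2 le_rfl this
      linarith
    · have h1 : InP 1 (Rc 1) := (inp1_iff 1).mpr (by norm_num)
      have := (hk 1 (by norm_num)).mp h1 2 (by norm_num)
      have := nec2 1 2 le_rfl this
      linarith
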